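/- arXiv:1806.07488 — 3 statements merged into one kernel-verified Lean document; each statement's English description precedes it below -/
import Mathlib

section
/- Let T be a symmetric 3×3 real matrix. Then for all indices i,j,k,l ∈ {1,2,3}: 2(T_ij T_kl − T_il T_jk) + (δ_ij δ_kl − δ_il δ_jk)((tr T)² − tr(T²)) + 2(δ_ij (T²)_kl + δ_kl (T²)_ij − δ_il (T²)_jk − δ_jk (T²)_il) + 2(δ_il T_jk + δ_jk T_il − δ_ij T_kl − δ_kl T_ij) tr T = 0. -/
def kron (i j : Fin 3) : ℝ := if i = j then 1 else 0

set_option maxHeartbeats 1000000 in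
theorem identity_1_10 (T : Matrix (Fin 3) (Fin 3) ℝ) (hT : T.transpose = T)
    (i j k l : Fin 3) :
    2 * (T i j * T k l - T i l * T j k)
      + (kron i j * kron k l - kron i l * kron j k)
          * ((Matrix.trace T) ^ 2 - Matrix.trace (T * T))
      + 2 * (kron i j * (T * T) k l + kron k l * (T * T) i j
              - kron i l * (T * T) j k - kron j k * (T * T) i l)
      + 2 * (kron i l * T j k + kron j k * T i l - kron i j * T k l
              - kron k l * T i j) * Matrix.trace T = 0 := by
  have h01 : T 0 1 = T 1 0 := by conv_lhs => rw [← hT, Matrix.transpose_apply]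
  have h02 : T 0 2 = T 2 0 := by conv_lhs => rw [← hT, Matrix.transpose_apply]
  have h12 : T 1 2 = T 2 1 := by conv_lhs => rw [← hT, Matrix.transpose_apply]
  fin_cases i <;> fin_cases j <;> fin_cases k <;> fin_cases l <;>
    simp [Matrix.trace, Matrix.mul_apply, Fin.sum_univ_three, kron, Matrix.diag] <;>
    (try simp only [h01, h02, h12]) <;> ring
end

section
/- Let T be a symmetric 3×3 real matrix. Then for all indices i,j,k,l ∈ {1,2,3}: 2(T_ik T_jl − T_il T_jk) + (δ_ik δ_jl − δ_il δ_jk)((tr T)² − tr(T²)) + 2(δ_ik (T²)_jl + δ_jl (T²)_ik − δ_il (T²)_jk − δ_jk (T²)_il) + 2(−δ_ik T_jl − δ_jl T_ik + δ_il T_jk + δ_jk T_il) tr T = 0. -/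
set_option maxHeartbeats 2000000 in
theorem identity_1_11 (T : Matrix (Fin 3) (Fin 3) ℝ) (hT : T.transpose = T)
    (i j k l : Fin 3) :
    2 * (T i k * T j l - T i l * T j k)
      + (kron i k * kron j l - kron i l * kron j k)
          * ((Matrix.trace T) ^ 2 - Matrix.trace (T * T))
      + 2 * (kron i k * (T * T) j l + kron j l * (T * T) i k
              - kron i l * (T * T) j k - kron j k * (T * T) i l)
      + 2 * (-(kron i k * T j l) - kron j l * T i k + kron i l * T j k
              + kron j k * T i l) * Matrix.trace T = 0 := by
  have h10 : T 1 0 = T 0 1 := by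
    have := congrFun (congrFun hT 0) 1; simpa [Matrix.transpose_apply] using this
  have h20 : T 2 0 = T 0 2 := by
    have := congrFun (congrFun hT 0) 2; simpa [Matrix.transpose_apply] using this
  have h21 : T 2 1 = T 1 2 := by
    have := congrFun (congrFun hT 1) 2; simpa [Matrix.transpose_apply] using this
  fin_cases i <;> fin_cases j <;> fin_cases k <;> fin_cases l <;>
    simp [kron, Matrix.trace, Matrix.mul_apply, Fin.sum_univ_three, Matrix.diag,
      h10, h20, h21, Fin.ext_iff] <;>
    ring
end

section
/- Let T be a symmetric 3×3 real matrix. If the fourth-order tensor A_ijkl = Σ over the 105 distinct isomers β_σ δ_{σ-paired indices} T_mn T_pq is formed, then the three quadratic terms T_ij T_kl, T_ik T_jl, T_il T_jk satisfy two linear relations modulo terms involving δ factors: specifically, T_ij T_kl − T_il T_jk and T_ik T_jl − T_il T_jk each lie in the span of {δ_ab δ_cd ((tr T)² − tr T²), δ_ab (T²)_cd, δ_ab T_cd tr T : appropriate index pairings (a,b,c,d) from (i,j,k,l)}. Consequently, modulo that span, T_ij T_kl ≡ T_ik T_jl ≡ T_il T_jk. -/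
open Matrix

set_option maxHeartbeats 4000000 in
theorem quadratic_terms_equal_mod_delta_span (T : Matrix (Fin 3) (Fin 3) ℝ)
    (hT : T.transpose = T) :
    letI c : ℝ := (Matrix.trace T) ^ 2 - Matrix.trace (T * T)
    letI G : Set (Fin 3 → Fin 3 → Fin 3 → Fin 3 → ℝ) :=
      { (fun i j k l => kron i j * kron k l * c),
        (fun i j k l => kron i k * kron j l * c),
        (fun i j k l => kron i l * kron j k * c),
        (fun i j k l => kron i j * (T * T) k l),
        (fun i j k l => kron i k * (T * T) j l),
        (fun i j k l => kron i l * (T * T) j k),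
        (fun i j k l => kron j k * (T * T) i l),
        (fun i j k l => kron j l * (T * T) i k),
        (fun i j k l => kron k l * (T * T) i j),
        (fun i j k l => kron i j * T k l * Matrix.trace T),
        (fun i j k l => kron i k * T j l * Matrix.trace T),
        (fun i j k l => kron i l * T j k * Matrix.trace T),
        (fun i j k l => kron j k * T i l * Matrix.trace T),
        (fun i j k l => kron j l * T i k * Matrix.trace T),
        (fun i j k l => kron k l * T i j * Matrix.trace T) }
    (fun i j k l => T i j * T k l - T i l * T j k) ∈ Submodule.span ℝ G
    ∧ (fun i j k l => T i k * T j l - T i l * T j k) ∈ Submodule.span ℝ G := by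

  have hs01 : T 1 0 = T 0 1 := congrFun (congrFun hT 0) 1
  have hs02 : T 2 0 = T 0 2 := congrFun (congrFun hT 0) 2
  have hs12 : T 2 1 = T 1 2 := congrFun (congrFun hT 1) 2
  have htr : Matrix.trace T = T 0 0 + T 1 1 + T 2 2 := by
    simp [Matrix.trace, Fin.sum_univ_three, Matrix.diag]
  have htr2 : Matrix.trace (T * T) = (T * T) 0 0 + (T * T) 1 1 + (T * T) 2 2 := by
    simp [Matrix.trace, Fin.sum_univ_three, Matrix.diag]
  have hmul : ∀ a b, (T * T) a b = T a 0 * T 0 b + T a 1 * T 1 b + T a 2 * T 2 b := by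
    intro a b; simp [Matrix.mul_apply, Fin.sum_univ_three]
  have key1 : (fun i j k l => T i j * T k l - T i l * T j k) =
      (-1/2 : ℝ) • (fun i j k l => kron i j * kron k l * (Matrix.trace T ^ 2 - Matrix.trace (T * T))) +
      (1/2 : ℝ) • (fun i j k l => kron i l * kron j k * (Matrix.trace T ^ 2 - Matrix.trace (T * T))) +
      (-1 : ℝ) • (fun i j k l => kron i j * (T * T) k l) +
      (1 : ℝ) • (fun i j k l => kron i l * (T * T) j k) +
      (1 : ℝ) • (fun i j k l => kron j k * (T * T) i l) +
      (-1 : ℝ) • (fun i j k l => kron k l * (T * T) i j) +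
      (1 : ℝ) • (fun i j k l => kron i j * T k l * Matrix.trace T) +
      (-1 : ℝ) • (fun i j k l => kron i l * T j k * Matrix.trace T) +
      (-1 : ℝ) • (fun i j k l => kron j k * T i l * Matrix.trace T) +
      (1 : ℝ) • (fun i j k l => kron k l * T i j * Matrix.trace T) := by
    funext i j k l
    simp only [Pi.add_apply, Pi.smul_apply, smul_eq_mul, htr, htr2, hmul]
    fin_cases i <;> fin_cases j <;> fin_cases k <;> fin_cases l <;>
      simp only [kron, Fin.reduceFinMk, Fin.isValue, Fin.reduceEq, reduceIte,
        hs01, hs02, hs12] <;> ring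
  have key2 : (fun i j k l => T i k * T j l - T i l * T j k) =
      (-1/2 : ℝ) • (fun i j k l => kron i k * kron j l * (Matrix.trace T ^ 2 - Matrix.trace (T * T))) +
      (1/2 : ℝ) • (fun i j k l => kron i l * kron j k * (Matrix.trace T ^ 2 - Matrix.trace (T * T))) +
      (-1 : ℝ) • (fun i j k l => kron i k * (T * T) j l) +
      (1 : ℝ) • (fun i j k l => kron i l * (T * T) j k) +
      (1 : ℝ) • (fun i j k l => kron j k * (T * T) i l) +
      (-1 : ℝ) • (fun i j k l => kron j l * (T * T) i k) +
      (1 : ℝ) • (fun i j k l => kron i k * T j l * Matrix.trace T) +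
      (-1 : ℝ) • (fun i j k l => kron i l * T j k * Matrix.trace T) +
      (-1 : ℝ) • (fun i j k l => kron j k * T i l * Matrix.trace T) +
      (1 : ℝ) • (fun i j k l => kron j l * T i k * Matrix.trace T) := by
    funext i j k l
    simp only [Pi.add_apply, Pi.smul_apply, smul_eq_mul, htr, htr2, hmul]
    fin_cases i <;> fin_cases j <;> fin_cases k <;> fin_cases l <;>
      simp only [kron, Fin.reduceFinMk, Fin.isValue, Fin.reduceEq, reduceIte,
        hs01, hs02, hs12] <;> ring
  constructor
  · rw [key1]
    exact Submodule.add_mem _ (Submodule.add_mem _ (Submodule.add_mem _ (Submodule.add_mem _ (Submodule.add_mem _ (Submodule.add_mem _ (Submodule.add_mem _ (Submodule.add_mem _ (Submodule.add_mem _ (Submodule.smul_mem _ _ (Submodule.subset_span (by simp))) (Submodule.smul_mem _ _ (Submodule.subset_span (by simp)))) (Submodule.smul_mem _ _ (Submodule.subset_span (by simp)))) (Submodule.smul_mem _ _ (Submodule.subset_span (by simp)))) (Submodule.smul_mem _ _ (Submodule.subset_span (by simp)))) (Submodule.smul_mem _ _ (Submodule.subset_span (by simp)))) (Submodule.smul_mem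 _ _ (Submodule.subset_span (by simp)))) (Submodule.smul_mem _ _ (Submodule.subset_span (by simp)))) (Submodule.smul_mem _ _ (Submodule.subset_span (by simp)))) (Submodule.smul_mem _ _ (Submodule.subset_span (by simp)))
  · rw [key2]
    exact Submodule.add_mem _ (Submodule.add_mem _ (Submodule.add_mem _ (Submodule.add_mem _ (Submodule.add_mem _ (Submodule.add_mem _ (Submodule.add_mem _ (Submodule.add_mem _ (Submodule.add_mem _ (Submodule.smul_mem _ _ (Submodule.subset_span (by simp))) (Submodule.smul_mem _ _ (Submodule.subset_span (by simp)))) (Submodule.smul_mem _ _ (Submodule.subset_span (by simp)))) (Submodule.smul_mem _ _ (Submodule.subset_span (by simp)))) (Submodule.smul_mem _ _ (Submodule.subset_span (by simp)))) (Submodule.smul_mem _ _ (Submodule.subset_span (by simp)))) (Submodule.smul_mem _ _ (Submodule.subset_span (by simp)))) (Submodule.smul_mem _ _ (Submodule.subset_span (by simp)))) (Submodule.smul_mem _ _ (Submodule.subset_span (by simp)))) (Submodule.smul_mem _ _ (Submodule.subset_span (by simp)))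
end
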